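/- Let p ∈ [2,∞) and A, D ∈ M_n(ℂ). Then w_p(diag(A, D)) ≤ 2^{1 - 2/p}( w_p(A)^p + w_p(D)^p )^{1/p}, with equality w_p(diag(A,D)) = (w_p(A)^p + w_p(D)^p)^{1/p} when A and D are Hermitian. -/

import Mathlib

open Matrix
open scoped ComplexOrder

variable {n : Type*} [Fintype n] [DecidableEq n]

/-- Real part of a matrix: `Re(B) = (B + Bᴴ)/2`. -/
noncomputable def matRe (B : Matrix n n ℂ) : Matrix n n ℂ := (1/2 : ℂ) • (B + Bᴴ)

/-- Generalized numerical radius associated to a norm-like function `N`. -/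
noncomputable def wN (N : Matrix n n ℂ → ℝ) (A : Matrix n n ℂ) : ℝ :=
  ⨆ θ : ℝ, N (matRe (Complex.exp (θ * Complex.I) • A))

/-- `N` is unitarily invariant. -/
def UnitarilyInvariant (N : Matrix n n ℂ → ℝ) : Prop :=
  ∀ (U V : Matrix.unitaryGroup n ℂ) (A : Matrix n n ℂ), N ((U : Matrix n n ℂ) * A * (V : Matrix n n ℂ)) = N A

/-- Real power of a positive definite matrix via spectral decomposition. -/
noncomputable def rpowM {A : Matrix n n ℂ} (hA : A.PosDef) (t : ℝ) : Matrix n n ℂ :=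
  (hA.1.eigenvectorUnitary : Matrix n n ℂ) *
    Matrix.diagonal (fun i => ((hA.1.eigenvalues i ^ t : ℝ) : ℂ)) *
    (hA.1.eigenvectorUnitary : Matrix n n ℂ)ᴴ

/-- Schatten `p`-norm of a matrix, via its singular values. -/
noncomputable def schatten (p : ℝ) (A : Matrix n n ℂ) : ℝ :=
  (∑ i, Real.sqrt ((Matrix.posSemidef_conjTranspose_mul_self A).1.eigenvalues i) ^ p) ^ (1/p)

/-- Schatten `p` generalized numerical radius. -/
noncomputable def wp (p : ℝ) (A : Matrix n n ℂ) : ℝ := wN (schatten p) A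

/-!
The real part of `e^{iθ} diag(A, D)` is `diag(Re(e^{iθ} A), Re(e^{iθ} D))`, and `‖·‖_p^p` is
additive over block-diagonal matrices, because the characteristic polynomial of `XᴴX` is the
product of those of the blocks. Taking the supremum over `θ` gives
`w_p(diag(A, D))^p ≤ w_p(A)^p + w_p(D)^p`, which is stronger than the claimed bound as
`2^{1 - 2/p} ≥ 1` for `p ≥ 2`. For Hermitian `H`, `Re(e^{iθ} H) = cos θ • H`, so `w_p(H) = ‖H‖_p`,
and the equality case is the additivity of `‖·‖_p^p` once more.
-/

namespace Matrix

open Polynomial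

lemma roots_charpoly_unitary_mul_diagonal_mul_star (U : unitaryGroup n ℂ) (d : n → ℂ) :
    ((U : Matrix n n ℂ) * diagonal d * star (U : Matrix n n ℂ)).charpoly.roots =
      Finset.univ.val.map d := by
  rw [charpoly_mul_comm, ← mul_assoc, UnitaryGroup.star_mul_self, one_mul, charpoly_diagonal,
    roots_prod _ _ (Finset.prod_ne_zero_iff.mpr fun i _ => X_sub_C_ne_zero (d i))]
  simp

lemma IsHermitian.sum_comp_eigenvalues {M : Matrix n n ℂ} (hM : M.IsHermitian) (g : ℝ → ℝ) :
    ∑ i, g (hM.eigenvalues i) = (M.charpoly.roots.map fun z => g z.re).sum := by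
  rw [hM.roots_charpoly_eq_eigenvalues, Multiset.map_map, Finset.sum_map_val]
  simp

omit [DecidableEq n] in
lemma trace_conjTranspose_mul_self (X : Matrix n n ℂ) :
    (Xᴴ * X).trace = ((∑ k, ∑ j, ‖X j k‖ ^ 2 : ℝ) : ℂ) := by
  simp only [trace, diag_apply, mul_apply, conjTranspose_apply, Complex.star_def,
    Complex.conj_mul']
  push_cast
  rfl

lemma eigenvalues_conjTranspose_mul_self_le (X : Matrix n n ℂ) (i : n) :
    (posSemidef_conjTranspose_mul_self X).1.eigenvalues i ≤ ∑ k, ∑ j, ‖X j k‖ ^ 2 := by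
  have hX := posSemidef_conjTranspose_mul_self X
  have htrace : ∑ k, hX.1.eigenvalues k = ∑ k, ∑ j, ‖X j k‖ ^ 2 := by
    have h := hX.1.trace_eq_sum_eigenvalues
    rw [trace_conjTranspose_mul_self] at h
    apply Complex.ofReal_injective
    rw [h, Complex.ofReal_sum]
    rfl
  exact htrace ▸ Finset.single_le_sum (fun k _ => hX.eigenvalues_nonneg k) (Finset.mem_univ i)

end Matrix

open Matrix

noncomputable def schattenPowSum (p : ℝ) (X : Matrix n n ℂ) : ℝ :=
  ∑ i, √((posSemidef_conjTranspose_mul_self X).1.eigenvalues i) ^ p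

lemma schattenPowSum_nonneg (p : ℝ) (X : Matrix n n ℂ) : 0 ≤ schattenPowSum p X :=
  Finset.sum_nonneg fun _ _ => Real.rpow_nonneg (Real.sqrt_nonneg _) _

lemma schattenPowSum_eq_sum_roots (p : ℝ) (X : Matrix n n ℂ) :
    schattenPowSum p X = ((Xᴴ * X).charpoly.roots.map fun z => √z.re ^ p).sum :=
  (posSemidef_conjTranspose_mul_self X).1.sum_comp_eigenvalues fun x => √x ^ p

lemma schattenPowSum_fromBlocks (p : ℝ) (B C : Matrix n n ℂ) :
    schattenPowSum p (fromBlocks B 0 0 C) = schattenPowSum p B + schattenPowSum p C := by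
  have hblock : (fromBlocks B 0 0 C)ᴴ * fromBlocks B 0 0 C = fromBlocks (Bᴴ * B) 0 0 (Cᴴ * C) := by
    simp [fromBlocks_conjTranspose, fromBlocks_multiply]
  simp only [schattenPowSum_eq_sum_roots, hblock, charpoly_fromBlocks_zero₁₂,
    Polynomial.roots_mul (mul_ne_zero (charpoly_monic _).ne_zero (charpoly_monic _).ne_zero),
    Multiset.map_add, Multiset.sum_add]

lemma schattenPowSum_smul (p : ℝ) (z : ℂ) (X : Matrix n n ℂ) :
    schattenPowSum p (z • X) = ‖z‖ ^ p * schattenPowSum p X := by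
  set hX := (posSemidef_conjTranspose_mul_self X).1
  set U := hX.eigenvectorUnitary
  have hspec : (z • X)ᴴ * (z • X) =
      (U : Matrix n n ℂ) * diagonal (fun i => ((‖z‖ ^ 2 * hX.eigenvalues i : ℝ) : ℂ)) *
        star (U : Matrix n n ℂ) := by
    have hscale : (z • X)ᴴ * (z • X) = ((‖z‖ ^ 2 : ℝ) : ℂ) • (Xᴴ * X) := by
      rw [conjTranspose_smul, smul_mul, Matrix.mul_smul, smul_smul, Complex.star_def,
        Complex.conj_mul']
      norm_cast
    rw [hscale]
    conv_lhs => rw [hX.spectral_theorem, Unitary.conjStarAlgAut_apply]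
    rw [← Matrix.smul_mul, ← Matrix.mul_smul, ← diagonal_smul]
    congr 3
    ext i
    simp
  rw [schattenPowSum_eq_sum_roots, hspec, roots_charpoly_unitary_mul_diagonal_mul_star,
    Multiset.map_map, Finset.sum_map_val, schattenPowSum, Finset.mul_sum]
  refine Finset.sum_congr rfl fun i _ => ?_
  simp only [Function.comp_apply, Complex.ofReal_re]
  rw [Real.sqrt_mul (sq_nonneg _), Real.sqrt_sq (norm_nonneg _),
    Real.mul_rpow (norm_nonneg _) (Real.sqrt_nonneg _)]

lemma schattenPowSum_le_of_norm_le {p : ℝ} (hp : 0 ≤ p) {X : Matrix n n ℂ} {Y : Matrix n n ℝ}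
    (hXY : ∀ i j, ‖X i j‖ ≤ Y i j) :
    schattenPowSum p X ≤ Fintype.card n * √(∑ k, ∑ j, Y j k ^ 2) ^ p := by
  have heig (i : n) := (eigenvalues_conjTranspose_mul_self_le X i).trans <|
    Finset.sum_le_sum fun k _ => Finset.sum_le_sum fun j _ =>
      pow_le_pow_left₀ (norm_nonneg _) (hXY j k) 2
  calc schattenPowSum p X ≤ ∑ _i : n, √(∑ k, ∑ j, Y j k ^ 2) ^ p :=
        Finset.sum_le_sum fun i _ =>
          Real.rpow_le_rpow (Real.sqrt_nonneg _) (Real.sqrt_le_sqrt (heig i)) hp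
    _ = _ := by rw [Finset.sum_const, nsmul_eq_mul, Finset.card_univ]

lemma schatten_eq_rpow (p : ℝ) (X : Matrix n n ℂ) : schatten p X = schattenPowSum p X ^ (1 / p) :=
  rfl

lemma schatten_nonneg (p : ℝ) (X : Matrix n n ℂ) : 0 ≤ schatten p X :=
  Real.rpow_nonneg (schattenPowSum_nonneg p X) _

lemma schatten_rpow {p : ℝ} (hp : p ≠ 0) (X : Matrix n n ℂ) :
    schatten p X ^ p = schattenPowSum p X := by
  rw [schatten_eq_rpow, ← Real.rpow_mul (schattenPowSum_nonneg p X), one_div_mul_cancel hp,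
    Real.rpow_one]

lemma schatten_fromBlocks {p : ℝ} (hp : p ≠ 0) (B C : Matrix n n ℂ) :
    schatten p (fromBlocks B 0 0 C) = (schatten p B ^ p + schatten p C ^ p) ^ (1 / p) := by
  rw [schatten_eq_rpow, schattenPowSum_fromBlocks, schatten_rpow hp, schatten_rpow hp]

lemma schatten_smul {p : ℝ} (hp : p ≠ 0) (z : ℂ) (X : Matrix n n ℂ) :
    schatten p (z • X) = ‖z‖ * schatten p X := by
  rw [schatten_eq_rpow, schatten_eq_rpow, schattenPowSum_smul,
    Real.mul_rpow (Real.rpow_nonneg (norm_nonneg z) _) (schattenPowSum_nonneg p X),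
    ← Real.rpow_mul (norm_nonneg z), mul_one_div_cancel hp, Real.rpow_one]

section RealPart

omit [Fintype n] [DecidableEq n]

lemma matRe_fromBlocks (A D : Matrix n n ℂ) :
    matRe (fromBlocks A 0 0 D) = fromBlocks (matRe A) 0 0 (matRe D) := by
  simp [matRe, fromBlocks_conjTranspose, fromBlocks_add, fromBlocks_smul]

lemma matRe_smul_of_isHermitian (z : ℂ) {H : Matrix n n ℂ} (hH : H.IsHermitian) :
    matRe (z • H) = (z.re : ℂ) • H := by
  rw [matRe, conjTranspose_smul, hH.eq, ← add_smul, smul_smul, Complex.star_def, Complex.add_conj]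
  push_cast
  ring_nf

lemma norm_matRe_smul_apply_le {z : ℂ} (hz : ‖z‖ = 1) (X : Matrix n n ℂ) (i j : n) :
    ‖matRe (z • X) i j‖ ≤ (‖X i j‖ + ‖X j i‖) / 2 := by
  calc ‖matRe (z • X) i j‖ = ‖z * X i j + star (z * X j i)‖ / 2 := by
        simp [matRe, div_eq_inv_mul]
    _ ≤ (‖X i j‖ + ‖X j i‖) / 2 := by
        gcongr
        refine (norm_add_le _ _).trans_eq ?_
        rw [norm_star, norm_mul, norm_mul, hz, one_mul, one_mul]

end RealPart

section NumericalRadius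

variable {p : ℝ}

lemma bddAbove_range_schatten_matRe (hp : 0 ≤ p) (X : Matrix n n ℂ) :
    BddAbove (Set.range fun θ : ℝ => schatten p (matRe (Complex.exp (θ * Complex.I) • X))) := by
  refine ⟨(Fintype.card n * √(∑ k, ∑ j, ((‖X j k‖ + ‖X k j‖) / 2) ^ 2) ^ p) ^ (1 / p), ?_⟩
  rintro _ ⟨θ, rfl⟩
  have hθ : ‖Complex.exp (θ * Complex.I)‖ = 1 := Complex.norm_exp_ofReal_mul_I θ
  exact Real.rpow_le_rpow (schattenPowSum_nonneg _ _)
    (schattenPowSum_le_of_norm_le hp (Y := .of fun i j => (‖X i j‖ + ‖X j i‖) / 2)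
      (norm_matRe_smul_apply_le hθ X)) (by positivity)

lemma schatten_matRe_le_wp (hp : 0 ≤ p) (X : Matrix n n ℂ) (θ : ℝ) :
    schatten p (matRe (Complex.exp (θ * Complex.I) • X)) ≤ wp p X :=
  le_ciSup (bddAbove_range_schatten_matRe hp X) θ

lemma wp_nonneg (hp : 0 ≤ p) (X : Matrix n n ℂ) : 0 ≤ wp p X :=
  (schatten_nonneg p _).trans (schatten_matRe_le_wp hp X 0)

lemma wp_of_isHermitian (hp : 0 < p) {H : Matrix n n ℂ} (hH : H.IsHermitian) :
    wp p H = schatten p H := by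
  have hθ (θ : ℝ) : schatten p (matRe (Complex.exp (θ * Complex.I) • H)) =
      |Real.cos θ| * schatten p H := by
    rw [matRe_smul_of_isHermitian _ hH, schatten_smul hp.ne', Complex.norm_real, Real.norm_eq_abs,
      Complex.exp_ofReal_mul_I_re]
  refine le_antisymm (ciSup_le fun θ => ?_) ?_
  · rw [hθ]
    exact mul_le_of_le_one_left (schatten_nonneg p H) (Real.abs_cos_le_one θ)
  · have h0 := schatten_matRe_le_wp hp.le H 0
    rwa [hθ, Real.cos_zero, abs_one, one_mul] at h0

lemma wp_fromBlocks_le (hp : 0 < p) (A D : Matrix n n ℂ) :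
    wp p (fromBlocks A 0 0 D) ≤ (wp p A ^ p + wp p D ^ p) ^ (1 / p) := by
  refine ciSup_le fun θ => ?_
  rw [fromBlocks_smul, smul_zero, matRe_fromBlocks, schatten_fromBlocks hp.ne']
  have hA := schatten_nonneg p (matRe (Complex.exp (θ * Complex.I) • A))
  have hD := schatten_nonneg p (matRe (Complex.exp (θ * Complex.I) • D))
  exact Real.rpow_le_rpow (add_nonneg (Real.rpow_nonneg hA p) (Real.rpow_nonneg hD p))
    (add_le_add (Real.rpow_le_rpow hA (schatten_matRe_le_wp hp.le A θ) hp.le)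
      (Real.rpow_le_rpow hD (schatten_matRe_le_wp hp.le D θ) hp.le)) (by positivity)

lemma wp_fromBlocks_of_isHermitian (hp : 0 < p) {A D : Matrix n n ℂ}
    (hA : A.IsHermitian) (hD : D.IsHermitian) :
    wp p (fromBlocks A 0 0 D) = (wp p A ^ p + wp p D ^ p) ^ (1 / p) := by
  rw [wp_of_isHermitian hp (hA.fromBlocks conjTranspose_zero hD), wp_of_isHermitian hp hA,
    wp_of_isHermitian hp hD, schatten_fromBlocks hp.ne']

end NumericalRadius

theorem wp_block_diagonal (A D : Matrix n n ℂ) {p : ℝ} (hp : 2 ≤ p) :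
    wp p (Matrix.fromBlocks A 0 0 D) ≤ 2 ^ (1 - 2/p) * (wp p A ^ p + wp p D ^ p) ^ (1/p) ∧
    (A.IsHermitian → D.IsHermitian →
      wp p (Matrix.fromBlocks A 0 0 D) = (wp p A ^ p + wp p D ^ p) ^ (1/p)) := by
  have hp0 : 0 < p := by linarith
  have hfactor : (1 : ℝ) ≤ 2 ^ (1 - 2 / p) :=
    Real.one_le_rpow one_le_two (sub_nonneg.2 ((div_le_one hp0).2 hp))
  refine ⟨(wp_fromBlocks_le hp0 A D).trans (le_mul_of_one_le_left ?_ hfactor),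
    wp_fromBlocks_of_isHermitian hp0⟩
  exact Real.rpow_nonneg (add_nonneg (Real.rpow_nonneg (wp_nonneg hp0.le A) p)
    (Real.rpow_nonneg (wp_nonneg hp0.le D) p)) _
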